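/- arXiv:math/0501197 — 4 statements merged into one kernel-verified Lean document; each statement's English description precedes it below -/
import Mathlib

section
/- Let H ∈ (0, 1/2), let ε ∈ (0, 2H), and let 0 ≤ s' < t' ≤ s < t be real numbers. Then |ρ_H(s',t';s,t)| ≤ (H(1−2H)/(2H−ε)) · (t'−s')^{2H−ε} · ∫_s^t (u−t')^{ε−1} du, where the integral ∫_s^t (u−t')^{ε−1} du is finite (equal to ((t−t')^ε − (s−t')^ε)/ε, and equal to (t−s)^ε/ε when s = t'). -/
open Set MeasureTheory intervalIntegral

/-- Covariance of fractional Brownian increments with Hurst parameter `H`: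
`ρ_H(a,b;c,d) = (1/2)(|d−a|^{2H} + |c−b|^{2H} − |c−a|^{2H} − |d−b|^{2H})`,
i.e. `E((W_b − W_a)(W_d − W_c))`. -/
noncomputable def fbmCov (H a b c d : ℝ) : ℝ :=
  (|d - a| ^ (2 * H) + |c - b| ^ (2 * H) - |c - a| ^ (2 * H) - |d - b| ^ (2 * H)) / 2

/-! With `g u = (u - s')^{2H-1} - (u - t')^{2H-1}` one has `ρ_H(s',t';s,t) = H ∫_s^t g`.
Writing `x = u - t'` and `δ = t' - s'`, `|g u| = (1-2H) ∫_x^{x+δ} y^{2H-2} dy`; splitting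
`y^{2H-2} = y^{ε-1} y^{2H-ε-1} ≤ x^{ε-1} y^{2H-ε-1}` and using subadditivity of
`y ↦ y^{2H-ε}` gives `|g u| ≤ (1-2H)/(2H-ε) δ^{2H-ε} (u - t')^{ε-1}`, which is integrated
over `[s, t]`. -/

lemma intervalIntegrable_sub_rpow {r : ℝ} (hr : -1 < r) (a b c : ℝ) :
    IntervalIntegrable (fun u => (u - c) ^ r) volume a b := by
  simpa using (intervalIntegrable_rpow' (a := a - c) (b := b - c) hr).comp_sub_right c

lemma integral_sub_rpow {r : ℝ} (hr : -1 < r) (a b c : ℝ) :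
    ∫ u in a..b, (u - c) ^ r = ((b - c) ^ (r + 1) - (a - c) ^ (r + 1)) / (r + 1) := by
  rw [integral_comp_sub_right (fun x => x ^ r) c, integral_rpow (Or.inl hr)]

lemma fbmCov_eq_mul_integral {H : ℝ} (hH : 0 < H) {s' t' s t : ℝ} (hs' : s' ≤ s)
    (ht' : t' ≤ s) (hst : s ≤ t) :
    fbmCov H s' t' s t = H * ∫ u in s..t, ((u - s') ^ (2 * H - 1) - (u - t') ^ (2 * H - 1)) := by
  have hr : -1 < 2 * H - 1 := by linarith
  rw [integral_sub (intervalIntegrable_sub_rpow hr _ _ _) (intervalIntegrable_sub_rpow hr _ _ _),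
    integral_sub_rpow hr, integral_sub_rpow hr, fbmCov, abs_of_nonneg (by linarith : 0 ≤ t - s'),
    abs_of_nonneg (by linarith : 0 ≤ s - t'), abs_of_nonneg (by linarith : 0 ≤ s - s'),
    abs_of_nonneg (by linarith : 0 ≤ t - t'), sub_add_cancel]
  field_simp
  ring

lemma integral_rpow_le_rpow_mul_integral {a b x δ : ℝ} (hb : b ≤ 0) (hx : 0 < x)
    (hδ : 0 ≤ δ) :
    ∫ y in x..x + δ, y ^ (a - 1) ≤ x ^ b * ∫ y in x..x + δ, y ^ (a - b - 1) := by
  have hxδ : x ≤ x + δ := by linarith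
  have hcont : ∀ r : ℝ, ContinuousOn (fun y : ℝ => y ^ r) (uIcc x (x + δ)) := fun r =>
    continuousOn_id.rpow_const fun y hy => Or.inl (hx.trans_le (uIcc_of_le hxδ ▸ hy).1).ne'
  rw [← intervalIntegral.integral_const_mul]
  refine integral_mono_on hxδ ((hcont _).intervalIntegrable)
    (((hcont _).intervalIntegrable).const_mul _) fun y hy => ?_
  have hy0 : 0 < y := hx.trans_le hy.1
  calc y ^ (a - 1) = y ^ b * y ^ (a - b - 1) := by rw [← Real.rpow_add hy0]; ring_nf
    _ ≤ x ^ b * y ^ (a - b - 1) :=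
      mul_le_mul_of_nonneg_right (Real.rpow_le_rpow_of_nonpos hx hy.1 hb) (by positivity)

lemma abs_rpow_add_sub_rpow_le {a b x δ : ℝ} (ha : a < 0) (hba : b < a) (hab : a - b ≤ 1)
    (hx : 0 < x) (hδ : 0 ≤ δ) :
    |(x + δ) ^ a - x ^ a| ≤ -a / (a - b) * δ ^ (a - b) * x ^ b := by
  have hxδ : x ≤ x + δ := by linarith
  have hI : ∫ y in x..x + δ, y ^ (a - 1) = ((x + δ) ^ a - x ^ a) / a := by
    have h0 : (0 : ℝ) ∉ uIcc x (x + δ) := by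
      rw [uIcc_of_le hxδ]
      exact fun h => hx.not_ge h.1
    rw [integral_rpow (Or.inr ⟨by linarith, h0⟩), sub_add_cancel]
  have hJ : ∫ y in x..x + δ, y ^ (a - b - 1) = ((x + δ) ^ (a - b) - x ^ (a - b)) / (a - b) := by
    rw [integral_rpow (Or.inl (by linarith)), sub_add_cancel]
  have hsub : (x + δ) ^ (a - b) - x ^ (a - b) ≤ δ ^ (a - b) := by
    linarith [Real.rpow_add_le_add_rpow hx.le hδ (by linarith : 0 ≤ a - b) hab]
  rw [abs_of_nonpos (sub_nonpos.2 (Real.rpow_le_rpow_of_nonpos hx hxδ ha.le))]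
  calc -((x + δ) ^ a - x ^ a) = -a * ∫ y in x..x + δ, y ^ (a - 1) := by
        rw [hI]
        field_simp [ha.ne]
    _ ≤ -a * (x ^ b * ∫ y in x..x + δ, y ^ (a - b - 1)) :=
        mul_le_mul_of_nonneg_left (integral_rpow_le_rpow_mul_integral (by linarith) hx hδ)
          (by linarith)
    _ = -a / (a - b) * ((x + δ) ^ (a - b) - x ^ (a - b)) * x ^ b := by
        rw [hJ]
        ring
    _ ≤ -a / (a - b) * δ ^ (a - b) * x ^ b := by
        have hc : 0 ≤ -a / (a - b) := div_nonneg (by linarith) (by linarith)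
        gcongr

theorem fbmCov_abs_le_general (H ε : ℝ) (hH : H ∈ Ioo (0 : ℝ) (1 / 2)) (hε : ε ∈ Ioo 0 (2 * H))
    (s' t' s t : ℝ) (h1 : s' < t') (h2 : t' ≤ s) (h3 : s < t) :
    IntervalIntegrable (fun u => (u - t') ^ (ε - 1)) volume s t ∧
      (∫ u in s..t, (u - t') ^ (ε - 1)) = ((t - t') ^ ε - (s - t') ^ ε) / ε ∧
      |fbmCov H s' t' s t| ≤
        H * (1 - 2 * H) / (2 * H - ε) * (t' - s') ^ (2 * H - ε) *
          ∫ u in s..t, (u - t') ^ (ε - 1) := by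
  obtain ⟨hH0, hH1⟩ := hH
  obtain ⟨hε0, hεH⟩ := hε
  have hint := intervalIntegrable_sub_rpow (by linarith : -1 < ε - 1) s t t'
  have hval : ∫ u in s..t, (u - t') ^ (ε - 1) = ((t - t') ^ ε - (s - t') ^ ε) / ε := by
    rw [integral_sub_rpow (by linarith), sub_add_cancel]
  refine ⟨hint, hval, ?_⟩
  set C := (1 - 2 * H) / (2 * H - ε) * (t' - s') ^ (2 * H - ε)
  have hbound : ∀ u ∈ Ioc s t,
      ‖(u - s') ^ (2 * H - 1) - (u - t') ^ (2 * H - 1)‖ ≤ C * (u - t') ^ (ε - 1) := by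
    intro u hu
    have h := abs_rpow_add_sub_rpow_le (a := 2 * H - 1) (b := ε - 1) (x := u - t')
      (δ := t' - s') (by linarith) (by linarith) (by linarith) (by linarith [hu.1]) (by linarith)
    rwa [sub_add_sub_cancel, neg_sub, sub_sub_sub_cancel_right] at h
  rw [fbmCov_eq_mul_integral hH0 (by linarith) h2 h3.le, abs_mul, abs_of_pos hH0,
    ← Real.norm_eq_abs]
  calc H * ‖∫ u in s..t, ((u - s') ^ (2 * H - 1) - (u - t') ^ (2 * H - 1))‖
      ≤ H * ∫ u in s..t, C * (u - t') ^ (ε - 1) :=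
        mul_le_mul_of_nonneg_left
          (norm_integral_le_of_norm_le h3.le (.of_forall hbound) (hint.const_mul C)) hH0.le
    _ = H * (1 - 2 * H) / (2 * H - ε) * (t' - s') ^ (2 * H - ε) *
          ∫ u in s..t, (u - t') ^ (ε - 1) := by
        rw [intervalIntegral.integral_const_mul]
        ring

/-- For `H ∈ (0,1/2)`, `ε ∈ (0,2H)` and `0 ≤ s' < t' ≤ s < t`, the integral
`∫_s^t (u−t')^{ε−1} du` is finite, equal to `((t−t')^ε − (s−t')^ε)/ε`, and
`|ρ_H(s',t';s,t)| ≤ (H(1−2H)/(2H−ε)) (t'−s')^{2H−ε} ∫_s^t (u−t')^{ε−1} du`. -/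
theorem fbmCov_abs_le (H ε : ℝ) (hH : H ∈ Ioo (0 : ℝ) (1 / 2)) (hε : ε ∈ Ioo 0 (2 * H))
    (s' t' s t : ℝ) (h0 : 0 ≤ s') (h1 : s' < t') (h2 : t' ≤ s) (h3 : s < t) :
    IntervalIntegrable (fun u => (u - t') ^ (ε - 1)) volume s t ∧
      (∫ u in s..t, (u - t') ^ (ε - 1)) = ((t - t') ^ ε - (s - t') ^ ε) / ε ∧
      |fbmCov H s' t' s t| ≤
        H * (1 - 2 * H) / (2 * H - ε) * (t' - s') ^ (2 * H - ε) *
          ∫ u in s..t, (u - t') ^ (ε - 1) :=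
  fbmCov_abs_le_general H ε hH hε s' t' s t h1 h2 h3
end

section
/- Let H ∈ (1/4, 1/2) and let p' ∈ (1/H, 4). Then there exists a constant C, depending only on H and p', such that for every finite increasing sequence of reals t_m < t_{m+1} < ... < t_n one has Σ_{k=m}^{n−1} Σ_{l=m}^{n−1} (t_{k+1}−t_k)^H (t_{l+1}−t_l)^H |ρ_H(t_k,t_{k+1}; t_l,t_{l+1})| ≤ C (t_n − t_m)^{4/p'} |D|^{4H − 4/p'}, where |D| = max_{m ≤ k ≤ n−1} (t_{k+1} − t_k). -/
/-!
Since `x ↦ x ^ (2H)` is concave for `2H ≤ 1`, the covariance of two non-overlapping increments is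
nonpositive. Along the row of an interval `I_k = [t_k, t_{k+1}]` the absolute covariances therefore
telescope: the intervals to the left of `I_k` contribute `-ρ(t_m, t_k; I_k)` and those to the right
`-ρ(I_k; t_{k+1}, t_n)`, each at most `|I_k|^{2H}/2`, and the diagonal contributes `|I_k|^{2H}`,
so every row sums to at most `2|I_k|^{2H}`. By AM-GM and the symmetry of `ρ` the weighted double
sum is at most `Σ_k |I_k|^{2H}` times the row sums, hence at most `2 Σ_k |I_k|^{4H}
≤ 2 (t_n - t_m) |D|^{4H-1}` as `4H > 1`; finally `|D| ≤ t_n - t_m` and `4/p' > 1` give the bound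
with `C = 2`.
-/

open Set

open Finset

lemma ConcaveOn.map_add_map_add_add_le {s : Set ℝ} {f : ℝ → ℝ} (hf : ConcaveOn ℝ s f)
    {a p r : ℝ} (ha : a ∈ s) (hapr : a + p + r ∈ s) (hp : 0 ≤ p) (hr : 0 ≤ r) :
    f a + f (a + p + r) ≤ f (a + p) + f (a + r) := by
  rcases (add_nonneg hp hr).eq_or_lt with hpr | hpr
  · obtain rfl : p = 0 := by linarith
    obtain rfl : r = 0 := by linarith
    simp
  -- `a + p` and `a + r` are the convex combinations of `a` and `a + p + r` with swapped weights
  set w := r / (p + r) with hw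
  have hw₀ : 0 ≤ w := div_nonneg hr hpr.le
  have hw₁ : 0 ≤ 1 - w := by rw [hw, sub_nonneg, div_le_one hpr]; linarith
  have hwpr : w * (p + r) = r := div_mul_cancel₀ r hpr.ne'
  have e₁ : w * a + (1 - w) * (a + p + r) = a + p := by linear_combination -hwpr
  have e₂ : (1 - w) * a + w * (a + p + r) = a + r := by linear_combination hwpr
  have h₁ := hf.2 ha hapr hw₀ hw₁ (by ring)
  have h₂ := hf.2 ha hapr hw₁ hw₀ (by ring)
  simp only [smul_eq_mul, e₁, e₂] at h₁ h₂
  linear_combination h₁ + h₂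

lemma monotoneOn_Icc_of_le_succ {α : Type*} [Preorder α] {f : ℕ → α} {m n : ℕ}
    (hf : ∀ k, m ≤ k → k < n → f k ≤ f (k + 1)) : MonotoneOn f (Set.Icc m n) := by
  intro i hi j hj hij
  induction j, hij using Nat.le_induction with
  | base => exact le_rfl
  | succ j hij ih =>
    exact (ih ⟨hi.1.trans hij, by have := hj.2; omega⟩).trans
      (hf j (hi.1.trans hij) (by have := hj.2; omega))

lemma Finset.sum_sum_mul_mul_le_sum_sq_mul_sum {ι 𝕜 : Type*} [Field 𝕜] [LinearOrder 𝕜]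
    [IsStrictOrderedRing 𝕜] (s : Finset ι) (x : ι → 𝕜) {a : ι → ι → 𝕜}
    (ha : ∀ k l, a k l = a l k) (ha₀ : ∀ k l, 0 ≤ a k l) :
    ∑ k ∈ s, ∑ l ∈ s, x k * x l * a k l ≤ ∑ k ∈ s, x k ^ 2 * ∑ l ∈ s, a k l := by
  have hswap : ∑ k ∈ s, ∑ l ∈ s, x l ^ 2 * a k l = ∑ k ∈ s, ∑ l ∈ s, x k ^ 2 * a k l := by
    rw [sum_comm]; simp_rw [ha]
  calc ∑ k ∈ s, ∑ l ∈ s, x k * x l * a k l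
      ≤ ∑ k ∈ s, ∑ l ∈ s, (x k ^ 2 + x l ^ 2) / 2 * a k l := by
        gcongr with k _ l _
        · exact ha₀ k l
        · linarith [two_mul_le_add_sq (x k) (x l)]
    _ = ∑ k ∈ s, x k ^ 2 * ∑ l ∈ s, a k l := by
        simp_rw [add_div, add_mul, sum_add_distrib, div_mul_eq_mul_div, ← sum_div, hswap,
          mul_sum]
        ring

lemma Finset.sum_rpow_le_sum_rpow_mul_sup'_rpow {ι : Type*} {s : Finset ι} (hs : s.Nonempty)
    {x : ι → ℝ} (hx : ∀ i ∈ s, 0 < x i) {p q : ℝ} (hp : 1 ≤ p) (hq : 1 ≤ q) :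
    ∑ i ∈ s, x i ^ p ≤ (∑ i ∈ s, x i) ^ q * s.sup' hs x ^ (p - q) := by
  obtain ⟨j, hj, hjD⟩ := exists_mem_eq_sup' hs x
  set D := s.sup' hs x
  have hD : 0 < D := hjD ▸ hx j hj
  have hDS : D ≤ ∑ i ∈ s, x i := hjD ▸ single_le_sum (fun i hi => (hx i hi).le) hj
  have hS : 0 < ∑ i ∈ s, x i := hD.trans_le hDS
  have hterm : ∀ i ∈ s, x i ^ p ≤ x i * D ^ (p - 1) := fun i hi => by
    rw [← mul_div_cancel₀ (x i ^ p) (hx i hi).ne', ← Real.rpow_sub_one (hx i hi).ne']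
    exact mul_le_mul_of_nonneg_left
      (Real.rpow_le_rpow (hx i hi).le (le_sup' x hi) (by linarith)) (hx i hi).le
  calc ∑ i ∈ s, x i ^ p ≤ (∑ i ∈ s, x i) * D ^ (q - 1) * D ^ (p - q) := by
        rw [mul_assoc, ← Real.rpow_add hD, show q - 1 + (p - q) = p - 1 by ring, sum_mul]
        exact sum_le_sum hterm
    _ ≤ (∑ i ∈ s, x i) * (∑ i ∈ s, x i) ^ (q - 1) * D ^ (p - q) := by gcongr
    _ = (∑ i ∈ s, x i) ^ q * D ^ (p - q) := by
        rw [Real.rpow_sub_one hS.ne', mul_div_cancel₀ _ hS.ne']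

section fbmCov

variable {H a b c d : ℝ}

lemma fbmCov_comm (H a b c d : ℝ) : fbmCov H a b c d = fbmCov H c d a b := by
  unfold fbmCov
  rw [abs_sub_comm d a, abs_sub_comm c b, abs_sub_comm c a, abs_sub_comm d b]
  ring

lemma fbmCov_self (hH : H ≠ 0) (a b : ℝ) : fbmCov H a b a b = |b - a| ^ (2 * H) := by
  unfold fbmCov
  simp only [abs_sub_comm a b, sub_self, abs_zero, Real.zero_rpow (mul_ne_zero two_ne_zero hH)]
  ring

lemma fbmCov_add_left (H a b e c d : ℝ) :
    fbmCov H a b c d + fbmCov H b e c d = fbmCov H a e c d := by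
  unfold fbmCov; ring

lemma sum_fbmCov_left (H c d : ℝ) (t : ℕ → ℝ) {u v : ℕ} (huv : u ≤ v) :
    ∑ l ∈ Finset.Ico u v, fbmCov H (t l) (t (l + 1)) c d = fbmCov H (t u) (t v) c d := by
  induction v, huv using Nat.le_induction with
  | base => simp [fbmCov]
  | succ v huv ih => rw [sum_Ico_succ_top huv, ih, fbmCov_add_left]

lemma fbmCov_nonpos_of_le (hH₀ : 0 ≤ H) (hH₁ : H ≤ 1 / 2) (hab : a ≤ b) (hbc : b ≤ c)
    (hcd : c ≤ d) : fbmCov H a b c d ≤ 0 := by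
  have h := (Real.concaveOn_rpow (p := 2 * H) (by linarith) (by linarith)).map_add_map_add_add_le
    (a := c - b) (p := b - a) (r := d - c) (Set.mem_Ici.2 (by linarith))
    (Set.mem_Ici.2 (by linarith))
    (by linarith) (by linarith)
  rw [show c - b + (b - a) + (d - c) = |d - a| by rw [abs_of_nonneg (by linarith)]; ring,
    show c - b + (b - a) = |c - a| by rw [abs_of_nonneg (by linarith)]; ring,
    show c - b + (d - c) = |d - b| by rw [abs_of_nonneg (by linarith)]; ring,
    ← abs_of_nonneg (sub_nonneg.2 hbc)] at h
  unfold fbmCov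
  linarith

lemma fbmCov_nonpos (hH₀ : 0 ≤ H) (hH₁ : H ≤ 1 / 2) (hab : a ≤ b) (hcd : c ≤ d)
    (h : b ≤ c ∨ d ≤ a) : fbmCov H a b c d ≤ 0 := by
  rcases h with h | h
  · exact fbmCov_nonpos_of_le hH₀ hH₁ hab h hcd
  · exact fbmCov_comm H a b c d ▸ fbmCov_nonpos_of_le hH₀ hH₁ hcd h hab

lemma neg_fbmCov_adjacent_le_left (hH : 0 < H) (hab : a ≤ b) (hbd : b ≤ d) :
    -fbmCov H a b b d ≤ (b - a) ^ (2 * H) / 2 := by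
  have : (d - b) ^ (2 * H) ≤ (d - a) ^ (2 * H) :=
    Real.rpow_le_rpow (by linarith) (by linarith) (by linarith)
  unfold fbmCov
  rw [sub_self, abs_zero, Real.zero_rpow (by positivity), abs_of_nonneg (by linarith : 0 ≤ d - a),
    abs_of_nonneg (by linarith : 0 ≤ b - a), abs_of_nonneg (by linarith : 0 ≤ d - b)]
  linarith

lemma neg_fbmCov_adjacent_le_right (hH : 0 < H) (hab : a ≤ b) (hbd : b ≤ d) :
    -fbmCov H a b b d ≤ (d - b) ^ (2 * H) / 2 := by
  have : (b - a) ^ (2 * H) ≤ (d - a) ^ (2 * H) :=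
    Real.rpow_le_rpow (by linarith) (by linarith) (by linarith)
  unfold fbmCov
  rw [sub_self, abs_zero, Real.zero_rpow (by positivity), abs_of_nonneg (by linarith : 0 ≤ d - a),
    abs_of_nonneg (by linarith : 0 ≤ b - a), abs_of_nonneg (by linarith : 0 ≤ d - b)]
  linarith

lemma sum_abs_fbmCov_eq_neg (hH₀ : 0 ≤ H) (hH₁ : H ≤ 1 / 2) {t : ℕ → ℝ} {u v : ℕ}
    (ht : MonotoneOn t (Set.Icc u v)) (huv : u ≤ v) (hcd : c ≤ d) (h : t v ≤ c ∨ d ≤ t u) :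
    ∑ l ∈ Finset.Ico u v, |fbmCov H (t l) (t (l + 1)) c d| = -fbmCov H (t u) (t v) c d := by
  rw [← sum_fbmCov_left H c d t huv, ← sum_neg_distrib]
  refine sum_congr rfl fun l hl => abs_of_nonpos (fbmCov_nonpos hH₀ hH₁ ?_ hcd ?_)
  all_goals obtain ⟨hul, hlv⟩ := Finset.mem_Ico.1 hl
  · exact ht ⟨hul, hlv.le⟩ ⟨by omega, hlv⟩ (by omega)
  · refine h.imp (fun h => le_trans ?_ h) (fun h => h.trans ?_)
    · exact ht ⟨by omega, hlv⟩ ⟨huv, le_rfl⟩ hlv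
    · exact ht ⟨le_rfl, huv⟩ ⟨hul, hlv.le⟩ hul

lemma sum_abs_fbmCov_le (hH₀ : 0 < H) (hH₁ : H ≤ 1 / 2) {t : ℕ → ℝ} {m n k : ℕ}
    (ht : MonotoneOn t (Set.Icc m n)) (hk : k ∈ Finset.Ico m n) :
    ∑ l ∈ Finset.Ico m n, |fbmCov H (t k) (t (k + 1)) (t l) (t (l + 1))| ≤
      2 * (t (k + 1) - t k) ^ (2 * H) := by
  obtain ⟨hmk, hkn⟩ := Finset.mem_Ico.1 hk
  have hmono : ∀ i j, m ≤ i → i ≤ j → j ≤ n → t i ≤ t j :=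
    fun i j hi hij hj => ht ⟨hi, hij.trans hj⟩ ⟨hi.trans hij, hj⟩ hij
  have hΔ : t k ≤ t (k + 1) := hmono _ _ hmk (by omega) hkn
  rw [← sum_Ico_consecutive _ hmk hkn.le, sum_eq_sum_Ico_succ_bot hkn]
  simp_rw [fbmCov_comm H (t k)]
  rw [sum_abs_fbmCov_eq_neg hH₀.le hH₁ (ht.mono (Set.Icc_subset_Icc_right hkn.le)) hmk hΔ
      (Or.inl le_rfl),
    sum_abs_fbmCov_eq_neg hH₀.le hH₁ (ht.mono (Set.Icc_subset_Icc_left (by omega))) hkn hΔ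
      (Or.inr le_rfl),
    fbmCov_self hH₀.ne', abs_of_nonneg (sub_nonneg.2 hΔ), abs_of_nonneg (by positivity),
    fbmCov_comm H (t (k + 1))]
  have hleft := neg_fbmCov_adjacent_le_right hH₀ (hmono _ _ le_rfl hmk hkn.le) hΔ
  have hright := neg_fbmCov_adjacent_le_left hH₀ hΔ (hmono _ _ (by omega) hkn le_rfl)
  linarith

end fbmCov

/-- For `H ∈ (1/4,1/2)` and `p' ∈ (1/H,4)` there is a constant `C = C(H,p')` such that for
every subdivision `t_m < … < t_n`,
`Σ_{k,l} (t_{k+1}−t_k)^H (t_{l+1}−t_l)^H |ρ_H(t_k,t_{k+1};t_l,t_{l+1})|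
  ≤ C (t_n−t_m)^{4/p'} |D|^{4H−4/p'}` where `|D|` is the mesh of the subdivision. -/
theorem fbmCov_subdivision_weighted_sum_le (H p' : ℝ)
    (hH : H ∈ Ioo (1 / 4 : ℝ) (1 / 2)) (hp' : p' ∈ Ioo (1 / H) 4) :
    ∃ C : ℝ, ∀ (m n : ℕ) (hmn : m < n) (t : ℕ → ℝ),
      (∀ k, m ≤ k → k < n → t k < t (k + 1)) →
      ∑ k ∈ Finset.Ico m n, ∑ l ∈ Finset.Ico m n,
          (t (k + 1) - t k) ^ H * (t (l + 1) - t l) ^ H *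
            |fbmCov H (t k) (t (k + 1)) (t l) (t (l + 1))| ≤
        C * (t n - t m) ^ (4 / p') *
          ((Finset.Ico m n).sup' (Finset.nonempty_Ico.mpr hmn)
              fun k => t (k + 1) - t k) ^ (4 * H - 4 / p') := by
  obtain ⟨hH₁, hH₂⟩ := hH
  obtain ⟨hp₁, hp₂⟩ := hp'
  have hH₀ : 0 < H := by linarith
  have hp₀ : 0 < p' := (one_div_pos.2 hH₀).trans hp₁
  refine ⟨2, fun m n hmn t ht => ?_⟩
  have hmono : MonotoneOn t (Set.Icc m n) :=
    monotoneOn_Icc_of_le_succ fun k hmk hkn => (ht k hmk hkn).le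
  have hΔ : ∀ k ∈ Finset.Ico m n, 0 < t (k + 1) - t k := fun k hk =>
    sub_pos.2 (ht k (Finset.mem_Ico.1 hk).1 (Finset.mem_Ico.1 hk).2)
  set D := (Finset.Ico m n).sup' (Finset.nonempty_Ico.mpr hmn) fun k => t (k + 1) - t k
  calc _ ≤ ∑ k ∈ Finset.Ico m n, ((t (k + 1) - t k) ^ H) ^ 2 *
          ∑ l ∈ Finset.Ico m n, |fbmCov H (t k) (t (k + 1)) (t l) (t (l + 1))| :=
        sum_sum_mul_mul_le_sum_sq_mul_sum _ (fun k => (t (k + 1) - t k) ^ H)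
          (fun k l => by rw [fbmCov_comm]) (fun _ _ => abs_nonneg _)
    _ ≤ ∑ k ∈ Finset.Ico m n, 2 * (t (k + 1) - t k) ^ (4 * H) := by
        refine sum_le_sum fun k hk => ?_
        rw [← Real.rpow_natCast, ← Real.rpow_mul (hΔ k hk).le]
        calc _ ≤ (t (k + 1) - t k) ^ (H * (2 : ℕ)) * (2 * (t (k + 1) - t k) ^ (2 * H)) :=
              mul_le_mul_of_nonneg_left (sum_abs_fbmCov_le hH₀ hH₂.le hmono hk)
                (Real.rpow_nonneg (hΔ k hk).le _)
          _ = _ := by rw [mul_left_comm, ← Real.rpow_add (hΔ k hk)]; ring_nf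
    _ ≤ 2 * ((∑ k ∈ Finset.Ico m n, (t (k + 1) - t k)) ^ (4 / p') * D ^ (4 * H - 4 / p')) := by
        rw [← mul_sum]
        gcongr
        exact sum_rpow_le_sum_rpow_mul_sup'_rpow _ hΔ (by linarith) ((one_le_div hp₀).2 hp₂.le)
    _ = _ := by rw [sum_Ico_sub t hmn.le]; ring
end

section
/- Let H ∈ (0, 1/2) and let f : [0,1] → ℝ be a Lipschitz function with f(0) = 0. Then there exists g ∈ L²([0,1]) such that for every x ∈ [0,1], f(x) = (1/Γ(H + 1/2)) ∫_0^x (x−t)^{H − 1/2} g(t) dt. In other words, every W^{1,∞} path vanishing at 0 lies in the image of L²([0,1]) under the Riemann–Liouville fractional integral operator I_{0+}^{H+1/2}, which is the Cameron–Martin space of fractional Brownian motion with Hurst parameter H. -/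
/-!
Extend `f` to a `K`-Lipschitz function `F` on `ℝ`. Its derivative `h = F'` is measurable and
bounded by `K`, and `f = I¹ h` on `[0,1]` because Lipschitz functions are absolutely continuous.
The Riemann–Liouville integrals form a semigroup, `Iᵃ (Iᵇ h) = Iᵃ⁺ᵇ h`: exchanging the order of
integration over the triangle `0 < s ≤ t ≤ x` leaves the Beta integral
`∫ₛˣ (x - t)^(a-1) (t - s)^(b-1) dt = B(a,b) (x - s)^(a+b-1)` as the new kernel.
Hence `g = I^(1/2-H) h` satisfies `I^(H+1/2) g = I¹ h = f`, and `g` is bounded, so lies in `L²`.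
-/

open Set MeasureTheory Filter Function

theorem integral_rpow_mul_sub_rpow {a b X : ℝ} (ha : 0 < a) (hb : 0 < b) (hX : 0 < X) :
    ∫ u in (0 : ℝ)..X, u ^ (a - 1) * (X - u) ^ (b - 1) =
      Real.Gamma a * Real.Gamma b / Real.Gamma (a + b) * X ^ (a + b - 1) := by
  have hscaled := Complex.betaIntegral_scaled a b hX
  rw [Complex.betaIntegral_eq_Gamma_mul_div _ _ (by simpa) (by simpa)] at hscaled
  apply Complex.ofReal_injective
  rw [← intervalIntegral.integral_ofReal, Complex.ofReal_mul, Complex.ofReal_cpow hX.le]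
  push_cast [← Complex.Gamma_ofReal]
  rw [mul_comm, ← hscaled]
  refine intervalIntegral.integral_congr fun u hu => ?_
  rw [uIcc_of_le hX.le] at hu
  simp only [Complex.ofReal_cpow hu.1, Complex.ofReal_cpow (sub_nonneg.2 hu.2)]
  push_cast
  rfl

theorem integral_sub_rpow_mul_sub_rpow {a b s x : ℝ} (ha : 0 < a) (hb : 0 < b) (hsx : s < x) :
    ∫ t in s..x, (x - t) ^ (a - 1) * (t - s) ^ (b - 1) =
      Real.Gamma a * Real.Gamma b / Real.Gamma (a + b) * (x - s) ^ (a + b - 1) := by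
  have hshift := intervalIntegral.integral_comp_sub_right
    (fun u => u ^ (b - 1) * (x - s - u) ^ (a - 1)) s (a := s) (b := x)
  simp only [sub_self, sub_sub_sub_cancel_right] at hshift
  rw [mul_comm (Real.Gamma a), add_comm a, ← integral_rpow_mul_sub_rpow hb ha (sub_pos.2 hsx),
    ← hshift]
  simp only [mul_comm]

theorem integral_sub_rpow_s6 {b t : ℝ} (hb : 0 < b) :
    ∫ s in (0 : ℝ)..t, (t - s) ^ (b - 1) = t ^ b / b := by
  rw [intervalIntegral.integral_comp_sub_left (fun u => u ^ (b - 1)) t, sub_self, sub_zero,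
    integral_rpow (Or.inl (by linarith)), sub_add_cancel, Real.zero_rpow hb.ne', sub_zero]

theorem intervalIntegrable_sub_rpow_s6 {b t : ℝ} (hb : 0 < b) :
    IntervalIntegrable (fun s => (t - s) ^ (b - 1)) volume 0 t := by
  simpa using ((intervalIntegral.intervalIntegrable_rpow' (by linarith : -1 < b - 1)).comp_sub_left
    t (a := 0) (b := t)).symm

theorem intervalIntegrable_sub_rpow_mul {b t K : ℝ} {h : ℝ → ℝ} (hb : 0 < b)
    (hh : Measurable h) (hK : ∀ s, |h s| ≤ K) :
    IntervalIntegrable (fun s => (t - s) ^ (b - 1) * h s) volume 0 t := by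
  have hbdd : ∀ s, ‖h s‖ ≤ K := hK
  obtain ⟨hker₁, hker₂⟩ := intervalIntegrable_sub_rpow_s6 hb (t := t)
  exact ⟨hker₁.mul_bdd hh.aestronglyMeasurable (.of_forall hbdd),
    hker₂.mul_bdd hh.aestronglyMeasurable (.of_forall hbdd)⟩

theorem integral_norm_sub_rpow_mul_le {a b x t K : ℝ} {h : ℝ → ℝ} (hb : 0 < b)
    (hK : ∀ s, |h s| ≤ K) (ht : t ∈ Ioc 0 x) :
    ∫ s in Ioc 0 t, ‖(x - t) ^ (a - 1) * ((t - s) ^ (b - 1) * h s)‖ ≤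
      (x - t) ^ (a - 1) * (K * (x ^ b / b)) := by
  have hxt : 0 ≤ (x - t) ^ (a - 1) := Real.rpow_nonneg (sub_nonneg.2 ht.2) _
  have hK0 : 0 ≤ K := (abs_nonneg _).trans (hK 0)
  calc ∫ s in Ioc 0 t, ‖(x - t) ^ (a - 1) * ((t - s) ^ (b - 1) * h s)‖
      ≤ ∫ s in Ioc 0 t, (x - t) ^ (a - 1) * (K * (t - s) ^ (b - 1)) := by
        refine integral_mono_of_nonneg (.of_forall fun _ => norm_nonneg _)
          (((intervalIntegrable_sub_rpow_s6 hb).1.const_mul K).const_mul _) ?_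
        filter_upwards [ae_restrict_mem measurableSet_Ioc] with s hs
        have hker : 0 ≤ (t - s) ^ (b - 1) := Real.rpow_nonneg (sub_nonneg.2 hs.2) _
        rw [norm_mul, norm_mul, Real.norm_of_nonneg hxt, Real.norm_of_nonneg hker,
          Real.norm_eq_abs, mul_comm _ |h s|]
        gcongr
        exact hK s
    _ = (x - t) ^ (a - 1) * (K * (t ^ b / b)) := by
        rw [integral_const_mul, integral_const_mul, ← intervalIntegral.integral_of_le ht.1.le,
          integral_sub_rpow_s6 hb]
    _ ≤ (x - t) ^ (a - 1) * (K * (x ^ b / b)) := by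
        gcongr <;> linarith [ht.1, ht.2]

theorem abs_integral_sub_rpow_mul_le {b t K : ℝ} {h : ℝ → ℝ} (hb : 0 < b) (ht : 0 ≤ t)
    (hK : ∀ s, |h s| ≤ K) :
    |∫ s in (0 : ℝ)..t, (t - s) ^ (b - 1) * h s| ≤ K * (t ^ b / b) := by
  rw [← Real.norm_eq_abs, ← integral_sub_rpow_s6 hb, ← intervalIntegral.integral_const_mul]
  refine intervalIntegral.norm_integral_le_of_norm_le ht (.of_forall fun s hs => ?_)
    ((intervalIntegrable_sub_rpow_s6 hb).const_mul K)
  have hker : 0 ≤ (t - s) ^ (b - 1) := Real.rpow_nonneg (by linarith [hs.2]) _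
  rw [norm_mul, Real.norm_of_nonneg hker, Real.norm_eq_abs, mul_comm]
  exact mul_le_mul_of_nonneg_right (hK s) hker

def lowerTriangle (x : ℝ) : Set (ℝ × ℝ) := {p | 0 < p.2 ∧ p.2 ≤ p.1 ∧ p.1 ≤ x}

theorem measurableSet_lowerTriangle (x : ℝ) : MeasurableSet (lowerTriangle x) :=
  (measurableSet_lt measurable_const measurable_snd).inter
    ((measurableSet_le measurable_snd measurable_fst).inter
      (measurableSet_le measurable_fst measurable_const))

section
variable {E : Type*} [NormedAddCommGroup E] {x t : ℝ} (f : ℝ × ℝ → E)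

theorem indicator_lowerTriangle_of_fst_mem (ht : t ∈ Ioc 0 x) (s : ℝ) :
    (lowerTriangle x).indicator f (t, s) = (Ioc 0 t).indicator (fun s => f (t, s)) s := by
  simp only [lowerTriangle, indicator_apply, mem_Ioc, mem_ofPred_eq]
  grind

theorem indicator_lowerTriangle_of_fst_notMem (ht : t ∉ Ioc 0 x) (s : ℝ) :
    (lowerTriangle x).indicator f (t, s) = 0 :=
  indicator_of_notMem (fun hts => ht ⟨hts.1.trans_le hts.2.1, hts.2.2⟩) _

theorem indicator_lowerTriangle_of_snd_mem {s : ℝ} (hs : s ∈ Ioc 0 x) (t : ℝ) :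
    (lowerTriangle x).indicator f (t, s) = (Icc s x).indicator (fun t => f (t, s)) t := by
  simp only [lowerTriangle, indicator_apply, mem_Icc, mem_ofPred_eq]
  grind

theorem indicator_lowerTriangle_of_snd_notMem {s : ℝ} (hs : s ∉ Ioc 0 x) (t : ℝ) :
    (lowerTriangle x).indicator f (t, s) = 0 :=
  indicator_of_notMem (fun hts => hs ⟨hts.1, hts.2.1.trans hts.2.2⟩) _

theorem integral_integral_swap_lowerTriangle [NormedSpace ℝ E] {F : ℝ → ℝ → E} (hx : 0 ≤ x)
    (hF : IntegrableOn (uncurry F) (lowerTriangle x)) :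
    ∫ t in 0..x, ∫ s in 0..t, F t s = ∫ s in 0..x, ∫ t in s..x, F t s := by
  have hG : Integrable (uncurry fun t s => (lowerTriangle x).indicator (uncurry F) (t, s))
      (volume.prod volume) :=
    (integrable_indicator_iff (measurableSet_lowerTriangle x)).2 hF
  have hleft (t : ℝ) : ∫ s, (lowerTriangle x).indicator (uncurry F) (t, s) =
      (Ioc 0 x).indicator (fun t => ∫ s in Ioc 0 t, F t s) t := by
    by_cases ht : t ∈ Ioc 0 x
    · simp_rw [indicator_lowerTriangle_of_fst_mem _ ht, integral_indicator measurableSet_Ioc,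
        indicator_of_mem ht, uncurry_apply_pair]
    · simp_rw [indicator_lowerTriangle_of_fst_notMem _ ht, indicator_of_notMem ht, integral_zero]
  have hright (s : ℝ) : ∫ t, (lowerTriangle x).indicator (uncurry F) (t, s) =
      (Ioc 0 x).indicator (fun s => ∫ t in Ioc s x, F t s) s := by
    by_cases hs : s ∈ Ioc 0 x
    · simp_rw [indicator_lowerTriangle_of_snd_mem _ hs, integral_indicator measurableSet_Icc,
        integral_Icc_eq_integral_Ioc, indicator_of_mem hs, uncurry_apply_pair]
    · simp_rw [indicator_lowerTriangle_of_snd_notMem _ hs, indicator_of_notMem hs, integral_zero]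
  have hswap := integral_integral_swap hG
  simp only [hleft, hright, integral_indicator measurableSet_Ioc] at hswap
  calc ∫ t in 0..x, ∫ s in 0..t, F t s = ∫ t in Ioc 0 x, ∫ s in Ioc 0 t, F t s := by
        rw [intervalIntegral.integral_of_le hx]
        exact setIntegral_congr_fun measurableSet_Ioc fun t ht =>
          intervalIntegral.integral_of_le ht.1.le
    _ = ∫ s in Ioc 0 x, ∫ t in Ioc s x, F t s := hswap
    _ = ∫ s in 0..x, ∫ t in s..x, F t s := by
        rw [intervalIntegral.integral_of_le hx]
        exact setIntegral_congr_fun measurableSet_Ioc fun s hs =>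
          (intervalIntegral.integral_of_le hs.2).symm
end

theorem integrableOn_lowerTriangle {a b x K : ℝ} {h : ℝ → ℝ} (ha : 0 < a) (hb : 0 < b)
    (hh : Measurable h) (hK : ∀ s, |h s| ≤ K) :
    IntegrableOn (uncurry fun t s => (x - t) ^ (a - 1) * ((t - s) ^ (b - 1) * h s))
      (lowerTriangle x) := by
  set F : ℝ → ℝ → ℝ := fun t s => (x - t) ^ (a - 1) * ((t - s) ^ (b - 1) * h s)
  have hGm : Measurable ((lowerTriangle x).indicator (uncurry F)) :=
    (Measurable.indicator (by fun_prop) (measurableSet_lowerTriangle x))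
  rw [← integrable_indicator_iff (measurableSet_lowerTriangle x), Measure.volume_eq_prod,
    integrable_prod_iff hGm.aestronglyMeasurable]
  constructor
  · refine .of_forall fun t => ?_
    by_cases ht : t ∈ Ioc 0 x
    · simp_rw [indicator_lowerTriangle_of_fst_mem _ ht, uncurry_apply_pair]
      exact (integrable_indicator_iff measurableSet_Ioc).2
        ((intervalIntegrable_sub_rpow_mul hb hh hK).1.const_mul _)
    · simp_rw [indicator_lowerTriangle_of_fst_notMem _ ht]
      exact integrable_zero _ _ _
  · have hdom : Integrable ((Ioc 0 x).indicator fun t => (x - t) ^ (a - 1) * (K * (x ^ b / b))) :=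
      (integrable_indicator_iff measurableSet_Ioc).2
        ((intervalIntegrable_sub_rpow_s6 ha).1.mul_const _)
    refine hdom.mono' hGm.norm.aestronglyMeasurable.integral_prod_right' (.of_forall fun t => ?_)
    by_cases ht : t ∈ Ioc 0 x
    · simp_rw [indicator_lowerTriangle_of_fst_mem _ ht, norm_indicator_eq_indicator_norm,
        integral_indicator measurableSet_Ioc, indicator_of_mem ht]
      rw [Real.norm_of_nonneg (integral_nonneg fun _ => norm_nonneg _)]
      exact integral_norm_sub_rpow_mul_le hb hK ht
    · simp_rw [indicator_lowerTriangle_of_fst_notMem _ ht, indicator_of_notMem ht]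
      simp

noncomputable def riemannLiouvilleIntegral (α : ℝ) (g : ℝ → ℝ) (x : ℝ) : ℝ :=
  (1 / Real.Gamma α) * ∫ t in (0 : ℝ)..x, (x - t) ^ (α - 1) * g t

theorem riemannLiouvilleIntegral_one (g : ℝ → ℝ) (x : ℝ) :
    riemannLiouvilleIntegral 1 g x = ∫ t in (0 : ℝ)..x, g t := by
  simp [riemannLiouvilleIntegral]

theorem riemannLiouvilleIntegral_riemannLiouvilleIntegral {a b x K : ℝ} {h : ℝ → ℝ}
    (ha : 0 < a) (hb : 0 < b) (hh : Measurable h) (hK : ∀ s, |h s| ≤ K) (hx : 0 ≤ x) :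
    riemannLiouvilleIntegral a (riemannLiouvilleIntegral b h) x =
      riemannLiouvilleIntegral (a + b) h x := by
  have hkernel : ∫ t in 0..x, (x - t) ^ (a - 1) * ∫ s in 0..t, (t - s) ^ (b - 1) * h s =
      Real.Gamma a * Real.Gamma b / Real.Gamma (a + b) *
        ∫ s in 0..x, (x - s) ^ (a + b - 1) * h s := by
    calc _ = ∫ t in 0..x, ∫ s in 0..t, (x - t) ^ (a - 1) * ((t - s) ^ (b - 1) * h s) := by
          simp only [intervalIntegral.integral_const_mul]
      _ = ∫ s in 0..x, ∫ t in s..x, (x - t) ^ (a - 1) * ((t - s) ^ (b - 1) * h s) :=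
          integral_integral_swap_lowerTriangle hx (integrableOn_lowerTriangle ha hb hh hK)
      _ = ∫ s in 0..x, Real.Gamma a * Real.Gamma b / Real.Gamma (a + b) *
            ((x - s) ^ (a + b - 1) * h s) := by
          refine intervalIntegral.integral_congr_ae
            ((Measure.ae_ne volume x).mono fun s hsx hs => ?_)
          rw [uIoc_of_le hx] at hs
          simp_rw [← mul_assoc, intervalIntegral.integral_mul_const,
            integral_sub_rpow_mul_sub_rpow ha hb (lt_of_le_of_ne hs.2 hsx)]
      _ = _ := intervalIntegral.integral_const_mul _ _
  have hGa := (Real.Gamma_pos_of_pos ha).ne'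
  have hGb := (Real.Gamma_pos_of_pos hb).ne'
  have hGab := (Real.Gamma_pos_of_pos (add_pos ha hb)).ne'
  simp only [riemannLiouvilleIntegral, mul_left_comm _ (1 / Real.Gamma b),
    intervalIntegral.integral_const_mul, hkernel]
  field_simp

theorem aestronglyMeasurable_riemannLiouvilleIntegral (α : ℝ) {h : ℝ → ℝ} (hh : Measurable h) :
    AEStronglyMeasurable (riemannLiouvilleIntegral α h) (volume.restrict (Ici 0)) := by
  set Ψ : ℝ × ℝ → ℝ :=
    {p | 0 < p.2 ∧ p.2 ≤ p.1}.indicator fun p => (p.1 - p.2) ^ (α - 1) * h p.2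
  have hΨ : StronglyMeasurable fun t => ∫ s, Ψ (t, s) :=
    (Measurable.indicator (by fun_prop) ((measurableSet_lt measurable_const measurable_snd).inter
      (measurableSet_le measurable_snd measurable_fst))).stronglyMeasurable.integral_prod_right'
  refine (hΨ.aestronglyMeasurable.const_mul (1 / Real.Gamma α)).congr ?_
  filter_upwards [ae_restrict_mem measurableSet_Ici] with t ht
  rw [riemannLiouvilleIntegral, intervalIntegral.integral_of_le ht,
    ← integral_indicator measurableSet_Ioc]
  rfl

theorem abs_riemannLiouvilleIntegral_le {α t K : ℝ} {h : ℝ → ℝ} (hα : 0 < α)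
    (hK : ∀ s, |h s| ≤ K) (ht : 0 ≤ t) :
    |riemannLiouvilleIntegral α h t| ≤ K * t ^ α / Real.Gamma (α + 1) := by
  have hGα := Real.Gamma_pos_of_pos hα
  rw [riemannLiouvilleIntegral, abs_mul, abs_of_pos (one_div_pos.2 hGα),
    Real.Gamma_add_one hα.ne']
  calc 1 / Real.Gamma α * |∫ s in (0 : ℝ)..t, (t - s) ^ (α - 1) * h s|
      ≤ 1 / Real.Gamma α * (K * (t ^ α / α)) := by
        gcongr
        exact abs_integral_sub_rpow_mul_le hα ht hK
    _ = K * t ^ α / (α * Real.Gamma α) := by field_simp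

theorem memLp_riemannLiouvilleIntegral {α K : ℝ} {h : ℝ → ℝ} (hα : 0 < α) (hh : Measurable h)
    (hK : ∀ s, |h s| ≤ K) (p : ENNReal) (X : ℝ) :
    MemLp (riemannLiouvilleIntegral α h) p (volume.restrict (Icc 0 X)) := by
  have hK0 : 0 ≤ K := (abs_nonneg _).trans (hK 0)
  refine .of_bound ((aestronglyMeasurable_riemannLiouvilleIntegral α hh).mono_measure
    (Measure.restrict_mono Icc_subset_Ici_self le_rfl)) (K * X ^ α / Real.Gamma (α + 1)) ?_
  filter_upwards [ae_restrict_mem measurableSet_Icc] with t ht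
  refine (abs_riemannLiouvilleIntegral_le hα hK ht.1).trans ?_
  gcongr <;> linarith [ht.1, ht.2]

/-- Every Lipschitz function `f` on `[0,1]` with `f(0) = 0` lies in the Cameron–Martin space
of fractional Brownian motion with Hurst parameter `H ∈ (0,1/2)`, i.e. in the image of
`L²([0,1])` under the Riemann–Liouville fractional integral operator `I_{0+}^{H+1/2}`:
there is `g ∈ L²([0,1])` with `f(x) = (1/Γ(H+1/2)) ∫_0^x (x−t)^{H−1/2} g(t) dt` on `[0,1]`. -/
theorem lipschitz_mem_cameronMartin (H : ℝ) (hH : H ∈ Ioo (0 : ℝ) (1 / 2))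
    (f : ℝ → ℝ) (K : NNReal) (hf : LipschitzOnWith K f (Icc 0 1)) (hf0 : f 0 = 0) :
    ∃ g : ℝ → ℝ, MemLp g 2 (volume.restrict (Icc (0 : ℝ) 1)) ∧
      ∀ x ∈ Icc (0 : ℝ) 1,
        f x = (1 / Real.Gamma (H + 1 / 2)) * ∫ t in (0 : ℝ)..x, (x - t) ^ (H - 1 / 2) * g t := by
  obtain ⟨hH0, hH1⟩ := hH
  obtain ⟨F, hF, hFf⟩ := hf.extend_real
  have hbound : ∀ s, |deriv F s| ≤ K := fun s => norm_deriv_le_of_lipschitz hF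
  refine ⟨riemannLiouvilleIntegral (1 / 2 - H) (deriv F),
    memLp_riemannLiouvilleIntegral (by linarith) (measurable_deriv F) hbound 2 1, fun x hx => ?_⟩
  calc f x = ∫ t in (0 : ℝ)..x, deriv F t := by
        rw [hF.lipschitzOnWith.absolutelyContinuousOnInterval.integral_deriv_eq_sub, ← hFf hx,
          ← hFf (left_mem_Icc.2 zero_le_one), hf0, sub_zero]
    _ = riemannLiouvilleIntegral (H + 1 / 2)
          (riemannLiouvilleIntegral (1 / 2 - H) (deriv F)) x := by
        rw [riemannLiouvilleIntegral_riemannLiouvilleIntegral (by linarith) (by linarith)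
          (measurable_deriv F) hbound hx.1, show H + 1 / 2 + (1 / 2 - H) = 1 by ring,
          riemannLiouvilleIntegral_one]
    _ = _ := by rw [riemannLiouvilleIntegral, show H + 1 / 2 - 1 = H - 1 / 2 by ring]
end

section
/- Let E be a normed vector space, α ∈ (0,1], M ≥ 0, and let x : [0,1] → E be α-Hölder with constant M. Let D be a subdivision of [0,1] and let x^D be the piecewise-linear interpolation of x along D. Then x^D is α-Hölder with constant 3M, i.e. ‖x^D(t) − x^D(s)‖ ≤ 3M|t−s|^α for all s, t ∈ [0,1]. -/
/-!
On the piece `[t i, t (i + 1)]` the interpolant moves at constant speed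
`‖x (t (i + 1)) - x (t i)‖ / (t (i + 1) - t i) ≤ M (t (i + 1) - t i) ^ (α - 1)`, and since
`α ≤ 1` an increment of length `h` at most the piece length costs at most `M h ^ α`. If `s < t`
lie in different pieces, split `x^D t - x^D s` at the nodes `t (i + 1) ≤ t j` between them: two
increments inside pieces and one increment of `x` itself, each at most `M |t - s| ^ α`.
-/

open Set

namespace Real

theorem div_mul_rpow_le_rpow {α h L : ℝ} (hα : α ≤ 1) (hh : 0 ≤ h) (hhL : h ≤ L) :
    h / L * L ^ α ≤ h ^ α := by
  rcases (hh.trans hhL).eq_or_lt with rfl | hL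
  · simpa using rpow_nonneg hh α
  calc h / L * L ^ α ≤ (h / L) ^ α * L ^ α := by
        gcongr
        exact self_le_rpow_of_le_one (div_nonneg hh hL.le) ((div_le_one hL).2 hhL) hα
    _ = h ^ α := by rw [div_rpow hh hL.le, div_mul_cancel₀ _ (rpow_pos_of_pos hL α).ne']

end Real

theorem exists_mem_Icc_succ_of_mem_Icc {β : Type*} [LinearOrder β] (f : ℕ → β) {n : ℕ}
    (hn : 0 < n) {s : β} (hs : s ∈ Icc (f 0) (f n)) : ∃ i < n, s ∈ Icc (f i) (f (i + 1)) := by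
  induction n, hn using Nat.le_induction with
  | base => exact ⟨0, one_pos, hs⟩
  | succ n hn ih =>
    by_cases hsn : s ≤ f n
    · obtain ⟨i, hi, hsi⟩ := ih ⟨hs.1, hsn⟩
      exact ⟨i, hi.trans n.lt_succ_self, hsi⟩
    · exact ⟨n, n.lt_succ_self, le_of_not_ge hsn, hs.2⟩

theorem norm_interpolation_sub_le {E : Type*} [SeminormedAddCommGroup E] [NormedSpace ℝ E]
    {α M a b u v : ℝ} {p q : E} (hα : α ≤ 1) (hM : 0 ≤ M)
    (hpq : ‖q - p‖ ≤ M * (b - a) ^ α) (hu : u ∈ Icc a b) (hv : v ∈ Icc a b) :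
    ‖(p + ((v - a) / (b - a)) • (q - p)) - (p + ((u - a) / (b - a)) • (q - p))‖ ≤
      M * |v - u| ^ α := by
  have hab : 0 ≤ b - a := sub_nonneg.2 (hu.1.trans hu.2)
  have hvu : |v - u| ≤ b - a :=
    abs_sub_le_iff.2 ⟨by linarith [hv.2, hu.1], by linarith [hu.2, hv.1]⟩
  calc ‖(p + ((v - a) / (b - a)) • (q - p)) - (p + ((u - a) / (b - a)) • (q - p))‖
      = |v - u| / (b - a) * ‖q - p‖ := by
        rw [add_sub_add_left_eq_sub, ← sub_smul, norm_smul, Real.norm_eq_abs, ← sub_div,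
          sub_sub_sub_cancel_right, abs_div, abs_of_nonneg hab]
    _ ≤ |v - u| / (b - a) * (M * (b - a) ^ α) := by gcongr
    _ = M * (|v - u| / (b - a) * (b - a) ^ α) := by ring
    _ ≤ M * |v - u| ^ α := by gcongr; exact Real.div_mul_rpow_le_rpow hα (abs_nonneg _) hvu

theorem norm_sub_le_three_mul_of_piecewise {E : Type*} [SeminormedAddCommGroup E]
    {f : ℝ → E} {t : ℕ → ℝ} {N : ℕ} {α M : ℝ} (hα : 0 ≤ α) (hM : 0 ≤ M) (hN : 0 < N)
    (ht : MonotoneOn t (Iic N))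
    (hpiece : ∀ i < N, ∀ u ∈ Icc (t i) (t (i + 1)), ∀ v ∈ Icc (t i) (t (i + 1)),
      ‖f v - f u‖ ≤ M * |v - u| ^ α)
    (hnode : ∀ i ≤ N, ∀ j ≤ N, ‖f (t j) - f (t i)‖ ≤ M * |t j - t i| ^ α)
    {u v : ℝ} (hu : u ∈ Icc (t 0) (t N)) (hv : v ∈ Icc (t 0) (t N)) :
    ‖f v - f u‖ ≤ 3 * M * |v - u| ^ α := by
  wlog huv : u ≤ v generalizing u v
  · rw [norm_sub_rev, abs_sub_comm]
    exact this hv hu (le_of_not_ge huv)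
  obtain ⟨i, hi, hui⟩ := exists_mem_Icc_succ_of_mem_Icc t hN hu
  obtain ⟨j, hj, hvj⟩ := exists_mem_Icc_succ_of_mem_Icc t hN hv
  have hinner : ∀ a b, u ≤ a → a ≤ b → b ≤ v → M * |b - a| ^ α ≤ M * |v - u| ^ α := by
    intro a b hua hab hbv
    gcongr
  have hMvu : 0 ≤ M * |v - u| ^ α := by positivity
  by_cases hvi : v ≤ t (i + 1)
  · linarith [hpiece i hi u hui v ⟨hui.1.trans huv, hvi⟩]
  push Not at hvi
  have hij : i + 1 ≤ j := by
    by_contra! hji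
    linarith [hvj.2, ht (mem_Iic.2 (by omega)) (mem_Iic.2 hi) (show j + 1 ≤ i + 1 by omega)]
  have hnodes : t (i + 1) ≤ t j := ht (mem_Iic.2 hi) (mem_Iic.2 hj.le) hij
  have hfirst :=
    hpiece i hi u hui (t (i + 1)) ⟨ht (mem_Iic.2 hi.le) (mem_Iic.2 hi) i.le_succ, le_rfl⟩
  have hmiddle := hnode (i + 1) hi j hj.le
  have hlast := hpiece j hj (t j) ⟨le_rfl, ht (mem_Iic.2 hj.le) (mem_Iic.2 hj) j.le_succ⟩ v hvj
  calc ‖f v - f u‖ = ‖(f v - f (t j)) + (f (t j) - f (t (i + 1))) + (f (t (i + 1)) - f u)‖ := by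
        congr 1; abel
    _ ≤ ‖f v - f (t j)‖ + ‖f (t j) - f (t (i + 1))‖ + ‖f (t (i + 1)) - f u‖ := norm_add₃_le
    _ ≤ M * |v - u| ^ α + M * |v - u| ^ α + M * |v - u| ^ α := by
        gcongr
        · exact hlast.trans (hinner _ _ (by linarith [hui.2]) hvj.1 le_rfl)
        · exact hmiddle.trans (hinner _ _ (by linarith [hui.2]) hnodes (by linarith [hvj.1]))
        · exact hfirst.trans (hinner _ _ le_rfl hui.2 (by linarith))
    _ = 3 * M * |v - u| ^ α := by ring

/-- If `x : [0,1] → E` is `α`-Hölder with constant `M` and `x^D` is its piecewise-linear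
interpolation along a subdivision `D = (t_i)` of `[0,1]`, then `x^D` is `α`-Hölder with
constant `3M`. -/
theorem piecewiseLinear_holder {E : Type*} [NormedAddCommGroup E] [NormedSpace ℝ E]
    (α M : ℝ) (hα : α ∈ Ioc (0 : ℝ) 1) (hM : 0 ≤ M)
    (x : ℝ → E)
    (hx : ∀ s ∈ Icc (0 : ℝ) 1, ∀ t ∈ Icc (0 : ℝ) 1, ‖x t - x s‖ ≤ M * |t - s| ^ α)
    (N : ℕ) (hN : 0 < N) (tt : ℕ → ℝ) (ht0 : tt 0 = 0) (htN : tt N = 1)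
    (hmono : ∀ i < N, tt i < tt (i + 1))
    (xD : ℝ → E)
    (hxD : ∀ i < N, ∀ u ∈ Icc (tt i) (tt (i + 1)),
      xD u = x (tt i) + ((u - tt i) / (tt (i + 1) - tt i)) • (x (tt (i + 1)) - x (tt i))) :
    ∀ s ∈ Icc (0 : ℝ) 1, ∀ t ∈ Icc (0 : ℝ) 1, ‖xD t - xD s‖ ≤ 3 * M * |t - s| ^ α := by
  have htt : MonotoneOn tt (Iic N) := (strictMonoOn_Iic_of_lt_succ hmono).monotoneOn
  have hnode_mem : ∀ k ≤ N, tt k ∈ Icc (0 : ℝ) 1 := fun k hk =>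
    ⟨ht0 ▸ htt (mem_Iic.2 N.zero_le) (mem_Iic.2 hk) k.zero_le,
      htN ▸ htt (mem_Iic.2 hk) (mem_Iic.2 le_rfl) hk⟩
  have hxD_node : ∀ k ≤ N, xD (tt k) = x (tt k) := by
    intro k hk
    rcases hk.lt_or_eq with hk | rfl
    · simpa using hxD k hk (tt k) ⟨le_rfl, (hmono k hk).le⟩
    · obtain ⟨i, rfl⟩ := Nat.exists_eq_add_one_of_ne_zero hN.ne'
      have hi := hmono i i.lt_succ_self
      rw [hxD i i.lt_succ_self _ ⟨hi.le, le_rfl⟩, div_self (sub_ne_zero.2 hi.ne'), one_smul,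
        add_sub_cancel]
  intro s hs t ht
  rw [← ht0, ← htN] at hs ht
  refine norm_sub_le_three_mul_of_piecewise hα.1.le hM hN htt (fun i hi u hu v hv => ?_)
    (fun i hi j hj => ?_) hs ht
  · rw [hxD i hi u hu, hxD i hi v hv]
    refine norm_interpolation_sub_le hα.2 hM ?_ hu hv
    rw [← abs_of_nonneg (sub_nonneg.2 (hmono i hi).le)]
    exact hx _ (hnode_mem i hi.le) _ (hnode_mem (i + 1) hi)
  · rw [hxD_node i hi, hxD_node j hj]
    exact hx _ (hnode_mem i hi) _ (hnode_mem j hj)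
end
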